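/- arXiv:2012.10817 — 2 statements merged into one kernel-verified Lean document; each statement's English description precedes it below -/
import Mathlib

section
/- Let A be an abelian category, (X,Y) a GP-admissible pair in A with X ∩ Y = Proj(A), and (Z,W) a GI-admissible pair in A with Z ∩ W = Inj(A). Then GP_{(X,Y)} ⊥ Inj(A)^∨, i.e. Ext^i_A(G, N) = 0 for every G ∈ GP_{(X,Y)}, every N of finite Inj(A)-coresolution dimension, and every i > 0. -/
open CategoryTheory CategoryTheory.Limits

universe w v u

namespace RelativeGorenstein

variable {C : Type u} [Category.{v} C] [Abelian C]

section ExtDefs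

variable [HasExt.{w} C]

/-- Vanishing of the `i`-th Ext group `Ext^i(M, N) = 0`. -/
def extZero (M N : C) (i : ℕ) : Prop :=
  Subsingleton (Abelian.Ext.{w} M N i)

/-- The projective dimension, `pd M := min {n : Ext^j(M, -) = 0 for all j > n}`, as an
element of `ℕ∞` (with value `⊤` if no such `n` exists). -/
noncomputable def pd (M : C) : ℕ∞ :=
  sInf {n : ℕ∞ | ∃ m : ℕ, n = (m : ℕ∞) ∧ ∀ (N : C) (j : ℕ), m < j → extZero.{w} M N j}

/-- The injective dimension, `id N := min {n : Ext^j(-, N) = 0 for all j > n}`, as an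
element of `ℕ∞`. -/
noncomputable def idim (N : C) : ℕ∞ :=
  sInf {n : ℕ∞ | ∃ m : ℕ, n = (m : ℕ∞) ∧ ∀ (M : C) (j : ℕ), m < j → extZero.{w} M N j}

/-- The projective dimension of a class of objects. -/
noncomputable def pdClass (S : Set C) : ℕ∞ := ⨆ M ∈ S, pd.{w} M

/-- The injective dimension of a class of objects. -/
noncomputable def idClass (S : Set C) : ℕ∞ := ⨆ N ∈ S, idim.{w} N

end ExtDefs

/-- The class of projective objects. -/
def projClass (C : Type u) [Category.{v} C] [Abelian C] : Set C := {P | Projective P}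

/-- The class of injective objects. -/
def injClass (C : Type u) [Category.{v} C] [Abelian C] : Set C := {I | Injective I}

/-- An exact (acyclic) complex. -/
def Acyclic (P : CochainComplex C ℤ) : Prop := ∀ i, P.ExactAt i

/-- The complex `Hom_A(P•, Y)` obtained by applying `Hom_A(-, Y)` to a complex `P•`. -/
noncomputable def homOutComplex (P : CochainComplex C ℤ) (Y : C) :=
  ((preadditiveYoneda.obj Y).mapHomologicalComplex _).obj P.op

/-- The complex `Hom_A(P•, Y)` is exact. -/
def HomOutExact (P : CochainComplex C ℤ) (Y : C) : Prop :=
  ∀ i, (homOutComplex P Y).ExactAt i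

/-- The complex `Hom_A(Z, I•)` obtained by applying `Hom_A(Z, -)` to a complex `I•`. -/
noncomputable def homInComplex (Z : C) (I : CochainComplex C ℤ) :=
  ((preadditiveCoyoneda.obj (Opposite.op Z)).mapHomologicalComplex _).obj I

/-- The complex `Hom_A(Z, I•)` is exact. -/
def HomInExact (Z : C) (I : CochainComplex C ℤ) : Prop :=
  ∀ i, (homInComplex Z I).ExactAt i

/-- The class `GP_(X,Y)` of `(X,Y)`-Gorenstein projective objects: cycles of exact
complexes with terms in `X` that stay exact after applying `Hom_A(-, Y)` for every `Y ∈ Y`. -/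
def gpClass (X Y : Set C) : Set C :=
  {M | ∃ (P : CochainComplex C ℤ) (i : ℤ),
    (∀ n, P.X n ∈ X) ∧ Acyclic P ∧ (∀ B ∈ Y, HomOutExact P B) ∧
    Nonempty (M ≅ P.cycles i)}

/-- The class `GI_(Z,W)` of `(Z,W)`-Gorenstein injective objects: cycles of exact
complexes with terms in `W` that stay exact after applying `Hom_A(Z, -)` for every `Z ∈ Z`. -/
def giClass (Z W : Set C) : Set C :=
  {M | ∃ (I : CochainComplex C ℤ) (i : ℤ),
    (∀ n, I.X n ∈ W) ∧ Acyclic I ∧ (∀ A ∈ Z, HomInExact A I) ∧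
    Nonempty (M ≅ I.cycles i)}

/-- `ResDimLE G n M` : `M` admits a `G`-resolution of length at most `n`,
`0 → G_m → ⋯ → G_0 → M → 0` with all `G_i ∈ G` and `m ≤ n`. -/
def ResDimLE (G : Set C) : ℕ → C → Prop
  | 0, M => M ∈ G
  | n + 1, M => M ∈ G ∨ ∃ (K G₀ : C) (i : K ⟶ G₀) (p : G₀ ⟶ M) (w : i ≫ p = 0),
      (ShortComplex.mk i p w).ShortExact ∧ G₀ ∈ G ∧ ResDimLE G n K

/-- `CoresDimLE G n M` : `M` admits a `G`-coresolution of length at most `n`,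
`0 → M → G^0 → ⋯ → G^m → 0` with all `G^i ∈ G` and `m ≤ n`. -/
def CoresDimLE (G : Set C) : ℕ → C → Prop
  | 0, M => M ∈ G
  | n + 1, M => M ∈ G ∨ ∃ (G₀ K : C) (i : M ⟶ G₀) (p : G₀ ⟶ K) (w : i ≫ p = 0),
      (ShortComplex.mk i p w).ShortExact ∧ G₀ ∈ G ∧ CoresDimLE G n K

/-- The `G`-resolution dimension of `M`, as an element of `ℕ∞`. -/
noncomputable def resDim (G : Set C) (M : C) : ℕ∞ :=
  sInf {n : ℕ∞ | ∃ m : ℕ, n = (m : ℕ∞) ∧ ResDimLE G m M}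

/-- The `G`-coresolution dimension of `M`, as an element of `ℕ∞`. -/
noncomputable def coresDim (G : Set C) (M : C) : ℕ∞ :=
  sInf {n : ℕ∞ | ∃ m : ℕ, n = (m : ℕ∞) ∧ CoresDimLE G m M}

/-- The `(X,Y)`-Gorenstein projective dimension of `M`. -/
noncomputable def gpd (X Y : Set C) (M : C) : ℕ∞ := resDim (gpClass X Y) M

/-- The `(Z,W)`-Gorenstein injective dimension of `M`. -/
noncomputable def gid (Z W : Set C) (M : C) : ℕ∞ := coresDim (giClass Z W) M

variable (C) in
/-- The global `(X,Y)`-Gorenstein projective dimension of `A`. -/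
noncomputable def glGPD (X Y : Set C) : ℕ∞ := ⨆ M : C, gpd X Y M

variable (C) in
/-- The global `(Z,W)`-Gorenstein injective dimension of `A`. -/
noncomputable def glGID (Z W : Set C) : ℕ∞ := ⨆ M : C, gid Z W M

variable (C) in
/-- `Proj(A)^∧_n`, the class of objects of projective resolution dimension at most `n`. -/
def projWedge (n : ℕ) : Set C := {M | ResDimLE (projClass C) n M}

variable (C) in
/-- `Inj(A)^∨_n`, the class of objects of injective coresolution dimension at most `n`. -/
def injVee (n : ℕ) : Set C := {M | CoresDimLE (injClass C) n M}

variable (C) in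
/-- `Inj(A)^∨`, the class of objects of finite injective coresolution dimension. -/
def injVeeFin : Set C := {M | ∃ n : ℕ, CoresDimLE (injClass C) n M}

variable (C) in
/-- `Proj(A)^∧`, the class of objects of finite projective resolution dimension. -/
def projWedgeFin : Set C := {M | ∃ n : ℕ, ResDimLE (projClass C) n M}

section Admissible

variable [HasExt.{w} C]

/-- `(X,Y)` is a GP-admissible pair. -/
structure IsGPAdmissible (X Y : Set C) : Prop where
  exists_epi : ∀ A : C, ∃ (X₀ : C) (f : X₀ ⟶ A), X₀ ∈ X ∧ Epi f
  coprod_closed_left : ∀ {A B : C}, A ∈ X → B ∈ X → (A ⊞ B) ∈ X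
  coprod_closed_right : ∀ {A B : C}, A ∈ Y → B ∈ Y → (A ⊞ B) ∈ Y
  ext_closed : ∀ S : ShortComplex C, S.ShortExact → S.X₁ ∈ X → S.X₃ ∈ X → S.X₂ ∈ X
  ext_orth : ∀ A ∈ X, ∀ B ∈ Y, ∀ i : ℕ, 0 < i → extZero.{w} A B i
  exists_ses : ∀ A ∈ X, ∃ (W X' : C) (f : A ⟶ W) (g : W ⟶ X') (hw : f ≫ g = 0),
    (ShortComplex.mk f g hw).ShortExact ∧ W ∈ X ∩ Y ∧ X' ∈ X

/-- `(Z,W)` is a GI-admissible pair (the dual notion). -/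
structure IsGIAdmissible (Z W : Set C) : Prop where
  exists_mono : ∀ A : C, ∃ (W₀ : C) (f : A ⟶ W₀), W₀ ∈ W ∧ Mono f
  prod_closed_left : ∀ {A B : C}, A ∈ Z → B ∈ Z → (A ⊞ B) ∈ Z
  prod_closed_right : ∀ {A B : C}, A ∈ W → B ∈ W → (A ⊞ B) ∈ W
  ext_closed : ∀ S : ShortComplex C, S.ShortExact → S.X₁ ∈ W → S.X₃ ∈ W → S.X₂ ∈ W
  ext_orth : ∀ A ∈ Z, ∀ B ∈ W, ∀ i : ℕ, 0 < i → extZero.{w} A B i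
  exists_ses : ∀ B ∈ W, ∃ (W' V : C) (f : W' ⟶ V) (g : V ⟶ B) (hw : f ≫ g = 0),
    (ShortComplex.mk f g hw).ShortExact ∧ V ∈ Z ∩ W ∧ W' ∈ W

/-- `(F,G)` is a cotorsion pair: `G = F^⊥₁` and `F = ^⊥₁G` with respect to `Ext^1`. -/
structure IsCotorsionPair (F G : Set C) : Prop where
  right_eq : G = {N | ∀ A ∈ F, extZero.{w} A N 1}
  left_eq : F = {M | ∀ B ∈ G, extZero.{w} M B 1}

/-- A cotorsion pair `(F,G)` is complete. -/
def IsCompleteCotorsionPair (F G : Set C) : Prop :=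
  IsCotorsionPair.{w} F G ∧
    (∀ A : C, ∃ (B F₀ : C) (i : B ⟶ F₀) (p : F₀ ⟶ A) (hw : i ≫ p = 0),
      (ShortComplex.mk i p hw).ShortExact ∧ F₀ ∈ F ∧ B ∈ G) ∧
    (∀ A : C, ∃ (G₀ F₀ : C) (i : A ⟶ G₀) (p : G₀ ⟶ F₀) (hw : i ≫ p = 0),
      (ShortComplex.mk i p hw).ShortExact ∧ G₀ ∈ G ∧ F₀ ∈ F)

/-- A pair `(F,G)` is hereditary: `Ext^i(F,G) = 0` for all `F ∈ F`, `G ∈ G`, `i > 0`. -/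
def IsHereditaryPair (F G : Set C) : Prop :=
  ∀ A ∈ F, ∀ B ∈ G, ∀ i : ℕ, 0 < i → extZero.{w} A B i

end Admissible

end RelativeGorenstein

/-!
An object `N` with a finite injective coresolution has injective dimension `< d` for some `d`.
If every object of a class `S` sits in a short exact sequence `0 → A → E → A' → 0` with
`A' ∈ S` and `Ext^{>0}(E, N) = 0`, dimension shifting gives `Ext^i(A, N) ≅ Ext^{i+1}(A', N)`,
and iterating pushes the degree past `d`, so `Ext^{>0}(S, N) = 0`. This applies first to
`S = X`, with `E ∈ X ∩ Y` projective, and then to the cycles of an exact complex with terms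
in `X`, whose defining sequences `0 → Z^j → P^j → Z^{j+1} → 0` have middle terms in `X`.
-/

namespace RelativeGorenstein

variable {C : Type u} [Category.{v} C] [Abelian C]

lemma hasInjectiveDimensionLE_of_coresDimLE {n : ℕ} {N : C}
    (hN : CoresDimLE (injClass C) n N) : HasInjectiveDimensionLE N n := by
  induction n generalizing N with
  | zero =>
    have : Injective N := hN
    infer_instance
  | succ n ih =>
    rcases hN with hN | ⟨I, K, f, p, w, hS, hI, hK⟩
    · have : Injective N := hN
      exact hasInjectiveDimensionLT_of_ge N 1 (n + 2) (by omega)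
    · have : Injective I := hI
      exact hS.hasInjectiveDimensionLT_X₁ (n + 1) (ih hK)
        (hasInjectiveDimensionLT_of_ge I 1 (n + 2) (by omega))

end RelativeGorenstein

namespace HomologicalComplex

variable {C : Type u} [Category.{v} C] [Abelian C]

lemma shortExact_iCycles_toCycles {ι : Type*} {c : ComplexShape ι} (K : HomologicalComplex C c)
    {i j : ι} (hij : c.Rel i j) (hK : K.ExactAt j) :
    (ShortComplex.mk (K.iCycles i) (K.toCycles i j)
      (by rw [← cancel_mono (K.iCycles j), Category.assoc, toCycles_i, iCycles_d,
        Limits.zero_comp])).ShortExact where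
  exact := ShortComplex.exact_of_f_is_kernel _
    (isKernelOfComp (K.iCycles j) (K.d i j) (K.cyclesIsKernel i j (c.next_eq' hij)) _
      (K.toCycles_i i j))
  epi_g := by
    obtain rfl := c.prev_eq' hij
    exact hK.epi_toCycles

end HomologicalComplex

namespace CategoryTheory

open Abelian

variable {C : Type u} [Category.{v} C] [Abelian C] [HasExt.{w} C]

lemma subsingleton_ext_of_iso {M M' : C} (e : M ≅ M') (N : C) (n : ℕ)
    [Subsingleton (Ext.{w} M' N n)] : Subsingleton (Ext.{w} M N n) :=
  Function.LeftInverse.injective (g := fun x ↦ (Ext.mk₀ e.hom).comp x (zero_add n))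
    (f := fun x ↦ (Ext.mk₀ e.inv).comp x (zero_add n))
    (fun x ↦ by simp [Ext.mk₀_comp_mk₀_assoc]) |>.subsingleton

lemma ShortComplex.ShortExact.subsingleton_ext_X₁ {S : ShortComplex C} (hS : S.ShortExact)
    (N : C) (n : ℕ) (h₂ : Subsingleton (Ext.{w} S.X₂ N n))
    (h₃ : Subsingleton (Ext.{w} S.X₃ N (n + 1))) : Subsingleton (Ext.{w} S.X₁ N n) := by
  refine subsingleton_of_forall_eq 0 fun x ↦ ?_
  obtain ⟨x₂, rfl⟩ := Ext.contravariant_sequence_exact₁ hS N x (add_comm 1 n)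
    (Subsingleton.elim _ _)
  rw [Subsingleton.elim x₂ 0, Ext.comp_zero]

lemma subsingleton_ext_succ_of_forall_exists_shortExact (S : Set C) (N : C) (d : ℕ)
    [HasInjectiveDimensionLT N d]
    (hS : ∀ A ∈ S, ∃ (E A' : C) (f : A ⟶ E) (g : E ⟶ A') (w : f ≫ g = 0),
      (ShortComplex.mk f g w).ShortExact ∧ (∀ i, Subsingleton (Ext.{w} E N (i + 1))) ∧ A' ∈ S)
    {A : C} (hA : A ∈ S) (i : ℕ) : Subsingleton (Ext.{w} A N (i + 1)) := by
  suffices ∀ k, ∀ A ∈ S, ∀ i, d ≤ i + 1 + k → Subsingleton (Ext.{w} A N (i + 1)) from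
    this d A hA i (by omega)
  intro k
  induction k with
  | zero => exact fun A _ i hi ↦ HasInjectiveDimensionLT.subsingleton N d (i + 1) hi A
  | succ k ih =>
    intro A hA i hi
    obtain ⟨E, A', f, g, w, hses, hE, hA'⟩ := hS A hA
    exact hses.subsingleton_ext_X₁ N (i + 1) (hE i) (ih A' hA' (i + 1) (by omega))

end CategoryTheory

open CategoryTheory CategoryTheory.Limits RelativeGorenstein

theorem gp_perp_injVeeFin_general
    {C : Type u} [Category.{v} C] [Abelian C] [HasExt.{w} C]
    (X Y : Set C) (hXY : IsGPAdmissible.{w} X Y) (hcapXY : X ∩ Y = projClass C) :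
    ∀ G ∈ gpClass X Y, ∀ N ∈ injVeeFin C, ∀ i : ℕ, 0 < i → extZero.{w} G N i := by
  rintro G ⟨P, j, hPX, hP, -, ⟨e⟩⟩ N ⟨n, hN⟩ (_ | i) hi
  · exact absurd hi (lt_irrefl 0)
  have := hasInjectiveDimensionLE_of_coresDimLE hN
  have hX : ∀ A ∈ X, ∀ i, Subsingleton (Abelian.Ext.{w} A N (i + 1)) := by
    refine fun _ ↦ subsingleton_ext_succ_of_forall_exists_shortExact X N (n + 1) fun A hA ↦ ?_
    obtain ⟨W, X', f, g, w, hS, hW, hX'⟩ := hXY.exists_ses A hA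
    have : Projective W := (hcapXY ▸ hW : W ∈ projClass C)
    exact ⟨W, X', f, g, w, hS, Abelian.Ext.subsingleton_of_projective W N, hX'⟩
  have hZ : Subsingleton (Abelian.Ext.{w} (P.cycles j) N (i + 1)) := by
    refine subsingleton_ext_succ_of_forall_exists_shortExact (Set.range fun k ↦ P.cycles k) N
      (n + 1) ?_ ⟨j, rfl⟩ i
    rintro _ ⟨k, rfl⟩
    exact ⟨_, _, _, _, _, P.shortExact_iCycles_toCycles (by simp) (hP (k + 1)),
      hX _ (hPX k), k + 1, rfl⟩
  exact subsingleton_ext_of_iso e N (i + 1)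

/-- If `(X,Y)` is GP-admissible with `X ∩ Y = Proj(A)` and `(Z,W)` is
GI-admissible with `Z ∩ W = Inj(A)`, then `Ext^i(G, N) = 0` for every `G ∈ GP_(X,Y)`,
every `N` of finite injective coresolution dimension and every `i > 0`. -/
theorem gp_perp_injVeeFin
    {C : Type u} [Category.{v} C] [Abelian C] [HasExt.{w} C]
    (X Y Z W : Set C) (hXY : IsGPAdmissible.{w} X Y) (hcapXY : X ∩ Y = projClass C)
    (hZW : IsGIAdmissible.{w} Z W) (hcapZW : Z ∩ W = injClass C) :
    ∀ G ∈ gpClass X Y, ∀ N ∈ injVeeFin C, ∀ i : ℕ, 0 < i → extZero.{w} G N i :=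
  gp_perp_injVeeFin_general X Y hXY hcapXY
end

section
/- Let A be an abelian category, (X,Y) a GP-admissible pair in A with X ∩ Y = Proj(A), and (Z,W) a GI-admissible pair in A with Z ∩ W = Inj(A). If (GP_{(X,Y)}, Inj(A)^∨_n) is a complete cotorsion pair in A, then gl.GPD_{(X,Y)}(A) ≤ n, i.e. every object of A has (X,Y)-Gorenstein projective dimension at most n. -/
open CategoryTheory CategoryTheory.Limits

universe w v u

open CategoryTheory CategoryTheory.Limits RelativeGorenstein

/-! `Inj(A)^∨_n` consists of objects of injective dimension at most `n`, and each of its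
non-injective members embeds in an injective object with cokernel again in `Inj(A)^∨_n`; by
dimension shifting the cotorsion pair `(GP_(X,Y), Inj(A)^∨_n)` is therefore hereditary. Hence
for a left approximation `0 → B → G → M → 0` with `G ∈ GP_(X,Y)`, `Ext^{>k}(M, Inj(A)^∨_n) = 0`
implies `Ext^{>k-1}(B, Inj(A)^∨_n) = 0`. Starting from `k = n` and iterating `n` times reaches an
object `B` with `Ext^1(B, Inj(A)^∨_n) = 0`, i.e. `B ∈ GP_(X,Y)`. -/

namespace RelativeGorenstein

open Abelian

variable {C : Type u} [Category.{v} C] [Abelian C]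

lemma CoresDimLE.succ {G : Set C} : ∀ {m : ℕ} {M : C}, CoresDimLE G m M → CoresDimLE G (m + 1) M
  | 0, _, h => Or.inl h
  | _ + 1, _, Or.inl h => Or.inl h
  | _ + 1, _, Or.inr ⟨G₀, K, i, p, w, hS, hG₀, hK⟩ => Or.inr ⟨G₀, K, i, p, w, hS, hG₀, hK.succ⟩

lemma hasInjectiveDimensionLE_of_coresDimLE_s2 :
    ∀ {m : ℕ} {V : C}, CoresDimLE (injClass C) m V → HasInjectiveDimensionLE V m
  | 0, _, (h : Injective _) => inferInstance
  | _ + 1, V, Or.inl (h : Injective V) => hasInjectiveDimensionLT_of_ge V 1 _ (by omega)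
  | m + 1, _, Or.inr ⟨I, _, _, _, _, hS, (hI : Injective I), hK⟩ =>
    hS.hasInjectiveDimensionLT_X₁ (m + 1) (hasInjectiveDimensionLE_of_coresDimLE_s2 hK)
      (hasInjectiveDimensionLT_of_ge I 1 _ (by omega))

lemma injective_or_exists_shortExact_of_mem_injVee {n : ℕ} {V : C} (hV : V ∈ injVee C n) :
    Injective V ∨ ∃ (I K : C) (i : V ⟶ I) (p : I ⟶ K) (w : i ≫ p = 0),
      (ShortComplex.mk i p w).ShortExact ∧ Injective I ∧ K ∈ injVee C n := by
  cases n with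
  | zero => exact Or.inl hV
  | succ m =>
    rcases hV with hV | ⟨I, K, i, p, w, hS, hI, hK⟩
    · exact Or.inl hV
    · exact Or.inr ⟨I, K, i, p, w, hS, hI, hK.succ⟩

variable [HasExt.{w} C]

lemma extZero_of_mem_injVee {n j : ℕ} {V : C} (hV : V ∈ injVee C n) (A : C) (hj : n < j) :
    extZero.{w} A V j :=
  have := hasInjectiveDimensionLE_of_coresDimLE_s2 hV
  HasInjectiveDimensionLT.subsingleton V (n + 1) j hj A

lemma extZero_covariant_X₁ {A : C} {S : ShortComplex C} (hS : S.ShortExact) {k : ℕ}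
    (h₃ : extZero.{w} A S.X₃ k) (h₂ : extZero.{w} A S.X₂ (k + 1)) :
    extZero.{w} A S.X₁ (k + 1) :=
  subsingleton_of_forall_eq 0 fun x => by
    obtain ⟨x₃, rfl⟩ := Ext.covariant_sequence_exact₁ A hS x (h₂.elim _ _) rfl
    rw [h₃.elim x₃ 0, Ext.zero_comp]

lemma extZero_contravariant_X₁ {B : C} {S : ShortComplex C} (hS : S.ShortExact) {k : ℕ}
    (h₂ : extZero.{w} S.X₂ B k) (h₃ : extZero.{w} S.X₃ B (k + 1)) :
    extZero.{w} S.X₁ B k :=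
  subsingleton_of_forall_eq 0 fun x => by
    obtain ⟨x₂, rfl⟩ := Ext.contravariant_sequence_exact₁ hS B x (add_comm 1 k) (h₃.elim _ _)
    rw [h₂.elim x₂ 0, Ext.comp_zero]

lemma isHereditaryPair_injVee {F : Set C} {n : ℕ} (hcp : IsCotorsionPair.{w} F (injVee C n)) :
    IsHereditaryPair.{w} F (injVee C n) := by
  intro A hA V hV j hj
  induction j generalizing V with
  | zero => omega
  | succ j ih =>
    obtain rfl | hj := Nat.eq_zero_or_pos j
    · rw [hcp.right_eq] at hV
      exact hV A hA
    obtain ⟨k, rfl⟩ := Nat.exists_eq_add_one_of_ne_zero hj.ne'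
    rcases injective_or_exists_shortExact_of_mem_injVee hV with hV | ⟨I, K, i, p, w, hS, hI, hK⟩
    · exact Ext.subsingleton_of_injective A V (k + 1)
    · exact extZero_covariant_X₁ hS (ih K hK hj) (Ext.subsingleton_of_injective A I (k + 1))

lemma resDimLE_of_extZero {F G : Set C} (hcp : IsCompleteCotorsionPair.{w} F G)
    (hher : IsHereditaryPair.{w} F G) :
    ∀ (k : ℕ) (M : C), (∀ V ∈ G, ∀ j : ℕ, k < j → extZero.{w} M V j) → ResDimLE F k M
  | 0, M, hM => by
    show M ∈ F
    rw [hcp.1.left_eq]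
    exact fun V hV => hM V hV 1 one_pos
  | k + 1, M, hM => by
    obtain ⟨B, F₀, i, p, w, hS, hF₀, -⟩ := hcp.2.1 M
    refine Or.inr ⟨B, F₀, i, p, w, hS, hF₀, resDimLE_of_extZero hcp hher k B fun V hV j hj => ?_⟩
    exact extZero_contravariant_X₁ hS (hher F₀ hF₀ V hV j (by omega)) (hM V hV (j + 1) (by omega))

end RelativeGorenstein

theorem glGPD_le_of_completeCotorsionPair_general
    {C : Type u} [Category.{v} C] [Abelian C] [HasExt.{w} C]
    (X Y : Set C) (n : ℕ)
    (hcp : IsCompleteCotorsionPair.{w} (gpClass X Y) (injVee C n)) :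
    glGPD C X Y ≤ (n : ℕ∞) := by
  refine iSup_le fun M => sInf_le ⟨n, rfl, ?_⟩
  exact resDimLE_of_extZero hcp (isHereditaryPair_injVee hcp.1) n M
    fun V hV _ hj => extZero_of_mem_injVee hV M hj

/-- If `(X,Y)` is GP-admissible with `X ∩ Y = Proj(A)`, `(Z,W)` is
GI-admissible with `Z ∩ W = Inj(A)` and `(GP_(X,Y), Inj(A)^∨_n)` is a complete cotorsion
pair, then `gl.GPD_(X,Y)(A) ≤ n`. -/
theorem glGPD_le_of_completeCotorsionPair
    {C : Type u} [Category.{v} C] [Abelian C] [HasExt.{w} C]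
    (X Y Z W : Set C) (hXY : IsGPAdmissible.{w} X Y) (hcapXY : X ∩ Y = projClass C)
    (hZW : IsGIAdmissible.{w} Z W) (hcapZW : Z ∩ W = injClass C) (n : ℕ)
    (hcp : IsCompleteCotorsionPair.{w} (gpClass X Y) (injVee C n)) :
    glGPD C X Y ≤ (n : ℕ∞) :=
  glGPD_le_of_completeCotorsionPair_general X Y n hcp
end
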